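/- arXiv:2102.12287 — 2 statements merged into one kernel-verified Lean document; each statement's English description precedes it below -/
import Mathlib

section
/- Assume k ≤ p ≤ k + depth(I(Ω)) − 2 (equivalently, k ≤ p and I(Ω) contains a regular sequence of length p − k + 2). Then an element η ∈ Λ^p M can be written as η = ω₁∧⋯∧ω_k ∧ γ for some γ ∈ Λ^{p−k} M if and only if η ∧ ω_i = 0 for every i = 1,…,k. -/
open ExteriorAlgebra

/-- A list `a₁, …, a_q` of elements of `R` is a regular sequence: the ideal it generates is
proper, and each `aᵢ` is a non-zero-divisor on `R ⧸ (a₁, …, a_{i-1})`. -/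
def IsRegSeq (R : Type*) [CommRing R] (l : List R) : Prop :=
  Ideal.span {x | x ∈ l} ≠ ⊤ ∧
    ∀ i : Fin l.length, ∀ r : R,
      l.get i * r ∈ Ideal.span {x | x ∈ l.take i.1} →
        r ∈ Ideal.span {x | x ∈ l.take i.1}

/-- The ideal `I(x)` generated by the coefficients of an element `x` of the exterior algebra
of a (finite free) module `M` in an induced basis; equivalently (and basis-independently),
the ideal generated by the values `φ x` over all linear functionals `φ`. -/
def coeffIdeal (R : Type*) [CommRing R] {M : Type*} [AddCommGroup M] [Module R M]
    (x : ExteriorAlgebra R M) : Ideal R :=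
  Ideal.span (Set.range fun φ : Module.Dual R (ExteriorAlgebra R M) => φ x)

/-- `ω_J = ω_{j₁} ∧ ⋯ ∧ ω_{j_r}` for a strictly increasing multi-index `J`, encoded as a
finite set `s` of indices listed in increasing order. -/
noncomputable def wedgeProd (R : Type*) [CommRing R] {M : Type*} [AddCommGroup M] [Module R M]
    {k : ℕ} (ω : Fin k → M) (s : Finset (Fin k)) : ExteriorAlgebra R M :=
  ((s.sort (· ≤ ·)).map fun j => ExteriorAlgebra.ι R (ω j)).prod

/-!
Write `Ω = ω₁ ∧ ⋯ ∧ ω_k`, let `a₀, a₁, …` be the regular sequence and `Cᵢ = (a₀, …, a_{i-1})`.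
Two statements are proved by simultaneous induction on `q`, for all `i` leaving enough of the
sequence unused:

* (A_q) if `ζ ∈ Λ^q M` and `Ω ∧ ζ ≡ 0 mod Cᵢ`, then `ζ ≡ ζ₀ mod Cᵢ` with `Ω ∧ ζ₀ = 0`;
* (B_q) if `η ∈ Λ^{k+q} M` and `ωⱼ ∧ η ≡ 0 mod Cᵢ` for all `j`, then `η ≡ Ω ∧ γ mod Cᵢ`
  for some `γ ∈ Λ^q M`.

The engine is Cramer's rule for contractions: if all `ωⱼ ∧ η ≡ 0`, then
`Ω ∧ (ψ_k ⌟ ⋯ ψ₁ ⌟ η) ≡ det (ψ_b (ω_a)) • η`, and in a free module the coefficients of `Ω` are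
combinations of such minors. Hence `aᵢ • η ≡ Ω ∧ g mod Cᵢ`; then `Ω ∧ g ≡ 0 mod C_{i+1}`, so
(A_q) at `i + 1` rewrites `g` as `ζ₀ + aᵢ • γ` modulo `Cᵢ`, giving `aᵢ • (η - Ω ∧ γ) ≡ 0`, and
`aᵢ` is a non-zero-divisor modulo `Cᵢ`. (A_{q+1}) follows from (B_q) by splitting
`Ω = ω₁ ∧ Ω'` and inducting on `k`; (A_0) is regularity of `aᵢ` again. The exterior algebra of
a free module is flat, so the regular sequence stays regular on it.
-/

open RingTheory.Sequence

theorem IsRegSeq.isWeaklyRegular {R : Type*} [CommRing R] {l : List R} (hl : IsRegSeq R l) :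
    IsWeaklyRegular R l := by
  refine (isWeaklyRegular_iff_Fin R l).mpr fun i => ?_
  rw [isSMulRegular_quotient_iff_mem_of_smul_mem, Ideal.smul_eq_mul, Ideal.mul_top]
  exact hl.2 i

theorem RingTheory.Sequence.IsWeaklyRegular.exteriorAlgebra {R : Type*} [CommRing R]
    {M : Type*} [AddCommGroup M] [Module R M] [Module.Free R M] {l : List R}
    (hl : IsWeaklyRegular R l) : IsWeaklyRegular (ExteriorAlgebra R M) l :=
  have : Module.Flat R (ExteriorAlgebra R M) :=
    .of_linearEquiv (DirectSum.decomposeLinearEquiv fun i : ℕ => ⋀[R]^i M)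
  (TensorProduct.rid R _).isWeaklyRegular_congr l |>.mp hl.isWeaklyRegular_lTensor

theorem Ideal.ofList_take_succ {R : Type*} [CommRing R] (l : List R) {i : ℕ}
    (hi : i < l.length) :
    Ideal.ofList (l.take (i + 1)) = Ideal.ofList (l.take i) ⊔ Ideal.span {l[i]} := by
  rw [List.take_succ_eq_append_getElem hi, Ideal.ofList_append, Ideal.ofList_singleton]

section CoeffIdeal

variable {R : Type*} [CommRing R] {M : Type*} [AddCommGroup M] [Module R M]

theorem coeffIdeal_mul_le (x y : ExteriorAlgebra R M) :
    coeffIdeal R (x * y) ≤ coeffIdeal R y :=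
  Ideal.span_le.mpr <| by
    rintro _ ⟨φ, rfl⟩
    exact Ideal.subset_span ⟨φ ∘ₗ LinearMap.mulLeft R x, rfl⟩

theorem mul_mem_of_mem_coeffIdeal {I : Ideal R} {s a : R} {y : ExteriorAlgebra R M}
    (hy : s • y ∈ I • (⊤ : Submodule R _)) (ha : a ∈ coeffIdeal R y) : s * a ∈ I := by
  suffices coeffIdeal R y ≤ Submodule.comap (LinearMap.mulLeft R s) I from this ha
  refine Ideal.span_le.mpr ?_
  rintro _ ⟨φ, rfl⟩
  have := Submodule.smul_top_le_comap_smul_top I φ hy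
  rwa [Submodule.mem_comap, map_smul, Ideal.smul_eq_mul, Ideal.mul_top] at this

theorem coeffIdeal_ιMulti_le [Module.Free R M] {I : Ideal R} {r : ℕ} (υ : Fin r → M)
    (h : ∀ ψ : Fin r → Module.Dual R M, (Matrix.of fun i j => ψ j (υ i)).det ∈ I) :
    coeffIdeal R (ιMulti R r υ) ≤ I := by
  classical
  obtain ⟨κ, b⟩ := Module.Free.exists_basis R M
  let : LinearOrder κ := linearOrderOfSTO WellOrderingRel
  refine Ideal.span_le.mpr ?_
  rintro _ ⟨φ, rfl⟩
  set B := b.exteriorPower r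
  have hx := B.linearCombination_repr (exteriorPower.ιMulti R r υ)
  rw [Finsupp.linearCombination_apply] at hx
  change φ ((⋀[R]^r M).subtype (exteriorPower.ιMulti R r υ)) ∈ I
  rw [← hx, map_finsuppSum, map_finsuppSum]
  refine Ideal.sum_mem _ fun s _ => ?_
  dsimp only
  -- the coordinates of `υ₁ ∧ ⋯ ∧ υᵣ` in the induced basis are minors of `(b.coord · (υ ·))`
  rw [map_smul, map_smul, smul_eq_mul, exteriorPower.basis_repr_apply,
    exteriorPower.ιMultiDual_apply_ιMulti]
  exact Ideal.mul_mem_right _ _ (h _)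

end CoeffIdeal

namespace ExteriorAlgebra

variable {R : Type*} [CommRing R] {M : Type*} [AddCommGroup M] [Module R M]

theorem mul_ι_of_mem_exteriorPower {d : ℕ} {x : ExteriorAlgebra R M} (hx : x ∈ ⋀[R]^d M)
    (v : M) : x * ι R v = (-1 : R) ^ d • (ι R v * x) := by
  induction hx using Submodule.pow_induction_on_left' with
  | algebraMap r => rw [pow_zero, one_smul, Algebra.commutes]
  | add x y i _ _ hx hy => rw [add_mul, mul_add, hx, hy, smul_add]
  | mem_mul m hm i x _ hx =>
    obtain ⟨w, rfl⟩ := hm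
    have hswap : ι R w * ι R v = -(ι R v * ι R w) :=
      eq_neg_of_add_eq_zero_left (ι_add_mul_swap w v)
    rw [mul_assoc, hx, mul_smul_comm, ← mul_assoc, hswap, pow_succ, mul_neg_one, neg_smul,
      neg_mul, smul_neg, mul_assoc]

theorem mul_ι_eq_zero_iff {d : ℕ} {x : ExteriorAlgebra R M} (hx : x ∈ ⋀[R]^d M) (v : M) :
    x * ι R v = 0 ↔ ι R v * x = 0 := by
  rw [mul_ι_of_mem_exteriorPower hx, ((isUnit_neg_one (α := R)).pow d).smul_eq_zero]

theorem ιMulti_succ_eq_ιMulti_init_mul {r : ℕ} (υ : Fin (r + 1) → M) :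
    ιMulti R (r + 1) υ = ιMulti R r (Fin.init υ) * ι R (υ (Fin.last r)) := by
  simp only [ιMulti_apply, List.ofFn_succ', List.prod_concat, Fin.init]

theorem ιMulti_mul_ι_self {r : ℕ} (υ : Fin r → M) (j : Fin r) :
    ιMulti R r υ * ι R (υ j) = 0 := by
  rw [mul_ι_eq_zero_iff (ιMulti_range R r ⟨υ, rfl⟩), ιMulti_apply, ι_mul_prod_list]

theorem exists_mem_exteriorPower_sub_mul_mem {I : Ideal R} {r q : ℕ}
    {Ω η g : ExteriorAlgebra R M} (hΩ : Ω ∈ ⋀[R]^r M) (hη : η ∈ ⋀[R]^(r + q) M)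
    (h : η - Ω * g ∈ I • (⊤ : Submodule R _)) :
    ∃ γ ∈ ⋀[R]^q M, η - Ω * γ ∈ I • (⊤ : Submodule R _) := by
  let 𝒜 (i : ℕ) := ⋀[R]^i M
  refine ⟨GradedAlgebra.proj 𝒜 q g, SetLike.coe_mem _, ?_⟩
  have := Submodule.smul_top_le_comap_smul_top I (GradedAlgebra.proj 𝒜 (r + q)) h
  rwa [Submodule.mem_comap, map_sub, GradedAlgebra.proj_apply, GradedAlgebra.proj_apply,
    DirectSum.decompose_of_mem_same 𝒜 hη, DirectSum.coe_decompose_mul_add_of_left_mem 𝒜 hΩ,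
    ← GradedAlgebra.proj_apply] at this

/-- `iteratedContract ψ` contracts with `ψ 0` first, then with `ψ 1`, and so on; with this order
Cramer's rule `mk_ιMulti_mul_iteratedContract` holds without a sign. -/
noncomputable def iteratedContract :
    {r : ℕ} → (Fin r → Module.Dual R M) → ExteriorAlgebra R M →ₗ[R] ExteriorAlgebra R M
  | 0, _ => LinearMap.id
  | _ + 1, ψ => iteratedContract (Fin.tail ψ) ∘ₗ CliffordAlgebra.contractLeft (ψ 0)

theorem iteratedContract_succ {r : ℕ} (ψ : Fin (r + 1) → Module.Dual R M)
    (x : ExteriorAlgebra R M) :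
    iteratedContract ψ x =
      iteratedContract (Fin.tail ψ) (CliffordAlgebra.contractLeft (ψ 0) x) :=
  rfl

theorem iteratedContract_removeNth_succ {r : ℕ} (ψ : Fin (r + 2) → Module.Dual R M)
    (t : Fin (r + 1)) (x : ExteriorAlgebra R M) :
    iteratedContract (t.succ.removeNth ψ) x =
      iteratedContract (t.removeNth (Fin.tail ψ)) (CliffordAlgebra.contractLeft (ψ 0) x) := by
  have htail : Fin.tail (t.succ.removeNth ψ) = t.removeNth (Fin.tail ψ) := by
    ext j; simp [Fin.removeNth, Fin.tail, Fin.succ_succAbove_succ]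
  rw [iteratedContract_succ, htail]
  simp [Fin.removeNth]

theorem ι_mul_iteratedContract {r : ℕ} (ψ : Fin (r + 1) → Module.Dual R M) (u : M)
    (z : ExteriorAlgebra R M) :
    ι R u * iteratedContract ψ z =
      (-1 : R) ^ (r + 1) • iteratedContract ψ (ι R u * z) +
        ∑ t : Fin (r + 1),
          ((-1 : R) ^ (r + (t : ℕ)) * ψ t u) • iteratedContract (t.removeNth ψ) z := by
  have hι_mul (φ : Module.Dual R M) (x : ExteriorAlgebra R M) :
      ι R u * CliffordAlgebra.contractLeft φ x =
        φ u • x - CliffordAlgebra.contractLeft φ (ι R u * x) := by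
    rw [CliffordAlgebra.contractLeft_ι_mul, sub_sub_cancel]
  induction r generalizing z with
  | zero => simp [iteratedContract, hι_mul, sub_eq_add_neg, add_comm]
  | succ r ih =>
    have hsign (x : ℕ) : (-1 : R) ^ (r + 1 + (x + 1)) = (-1) ^ (r + x) := by ring
    rw [iteratedContract_succ, ih, hι_mul, map_sub, map_smul, ← iteratedContract_succ]
    conv_rhs => rw [Fin.sum_univ_succ]
    simp only [iteratedContract_removeNth_succ, Fin.removeNth_zero, Fin.val_zero, Fin.val_succ,
      hsign, Fin.tail_def]
    module

/-- Cramer's rule modulo `I`. -/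
theorem mk_ιMulti_mul_iteratedContract {I : Ideal R} {r : ℕ} (ψ : Fin r → Module.Dual R M)
    (υ : Fin r → M) {η : ExteriorAlgebra R M} (hη : ∀ j, ι R (υ j) * η ∈ I • (⊤ : Submodule R _)) :
    (Submodule.Quotient.mk (ιMulti R r υ * iteratedContract ψ η) :
        ExteriorAlgebra R M ⧸ I • (⊤ : Submodule R _)) =
      (Matrix.of fun i j => ψ j (υ i)).det • Submodule.Quotient.mk η := by
  induction r with
  | zero => simp [iteratedContract]
  | succ r ih =>
    have hlaplace : (Matrix.of fun i j => ψ j (υ i)).det =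
        ∑ t : Fin (r + 1), (-1 : R) ^ (r + (t : ℕ)) * ψ t (υ (Fin.last r)) *
          (Matrix.of fun i j => t.removeNth ψ j (Fin.init υ i)).det := by
      rw [Matrix.det_succ_row _ (Fin.last r)]
      simp only [Fin.succAbove_last, Fin.val_last]
      rfl
    have hvanish : (Submodule.Quotient.mk (ιMulti R r (Fin.init υ) *
        iteratedContract ψ (ι R (υ (Fin.last r)) * η)) :
          ExteriorAlgebra R M ⧸ I • (⊤ : Submodule R _)) = 0 :=
      (Submodule.Quotient.mk_eq_zero _).mpr <| Submodule.smul_top_le_comap_smul_top I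
        (LinearMap.mulLeft R _ ∘ₗ iteratedContract ψ) (hη _)
    rw [ιMulti_succ_eq_ιMulti_init_mul, mul_assoc, ι_mul_iteratedContract, mul_add,
      Finset.mul_sum, Submodule.Quotient.mk_add, mul_smul_comm, Submodule.Quotient.mk_smul,
      hvanish, smul_zero, zero_add, hlaplace, Finset.sum_smul]
    have ih' (ψ' : Fin r → Module.Dual R M) := ih ψ' (Fin.init υ) fun j => hη j.castSucc
    simp only [mul_smul_comm, ← Submodule.mkQ_apply, map_sum, map_smul] at ih' ⊢
    simp only [ih', smul_smul]

theorem exists_smul_sub_ιMulti_mul_mem [Module.Free R M] {I : Ideal R} {r q : ℕ}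
    (υ : Fin r → M) {η : ExteriorAlgebra R M} (hη : η ∈ ⋀[R]^(r + q) M)
    (hw : ∀ j, ι R (υ j) * η ∈ I • (⊤ : Submodule R _))
    {a : R} (ha : a ∈ coeffIdeal R (ιMulti R r υ)) :
    ∃ g ∈ ⋀[R]^q M, a • η - ιMulti R r υ * g ∈ I • (⊤ : Submodule R _) := by
  set N := LinearMap.range (LinearMap.mulLeft R (ιMulti R r υ)) ⊔ I • ⊤
  have hcoeff : coeffIdeal R (ιMulti R r υ) ≤ N.colon {η} := by
    refine coeffIdeal_ιMulti_le υ fun ψ => Submodule.mem_colon_singleton.mpr ?_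
    have hcramer := (Submodule.Quotient.eq _).mp (mk_ιMulti_mul_iteratedContract ψ υ hw).symm
    simpa using Submodule.add_mem_sup
      (LinearMap.mem_range_self (LinearMap.mulLeft R (ιMulti R r υ)) (iteratedContract ψ η))
      hcramer
  obtain ⟨_, ⟨g, rfl⟩, v, hv, hsum⟩ :=
    Submodule.mem_sup.mp (Submodule.mem_colon_singleton.mp (hcoeff ha))
  refine exists_mem_exteriorPower_sub_mul_mem (ιMulti_range R r ⟨υ, rfl⟩)
    (Submodule.smul_mem _ a hη) (g := g) ?_
  rwa [← hsum, LinearMap.mulLeft_apply, add_sub_cancel_left]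

theorem mem_smul_top_of_ιMulti_mul_mem {C : Ideal R} {c : R} {r : ℕ} {υ : Fin r → M}
    (hc : IsSMulRegular (ExteriorAlgebra R M ⧸ C • (⊤ : Submodule R (ExteriorAlgebra R M))) c)
    (hcΩ : c ∈ coeffIdeal R (ιMulti R r υ)) {ζ : ExteriorAlgebra R M} (hζ : ζ ∈ ⋀[R]^0 M)
    (h : ιMulti R r υ * ζ ∈ C • (⊤ : Submodule R _)) : ζ ∈ C • (⊤ : Submodule R _) := by
  rw [exteriorPower, pow_zero, Submodule.mem_one] at hζ
  obtain ⟨s, rfl⟩ := hζ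
  rw [← Algebra.commutes, ← Algebra.smul_def] at h
  refine mem_of_isSMulRegular_quotient_of_smul_mem hc ?_
  rw [Algebra.algebraMap_eq_smul_one, smul_smul, mul_comm]
  exact Submodule.smul_mem_smul (mul_mem_of_mem_coeffIdeal h hcΩ) Submodule.mem_top

theorem exists_sub_ιMulti_mul_mem_of_isSMulRegular [Module.Free R M] {C : Ideal R} {c : R}
    {r q : ℕ} {υ : Fin r → M}
    (hc : IsSMulRegular (ExteriorAlgebra R M ⧸ C • (⊤ : Submodule R (ExteriorAlgebra R M))) c)
    (hcΩ : c ∈ coeffIdeal R (ιMulti R r υ))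
    (hA : ∀ ζ ∈ ⋀[R]^q M, ιMulti R r υ * ζ ∈ (C ⊔ Ideal.span {c}) • (⊤ : Submodule R _) →
      ζ ∈ LinearMap.ker (LinearMap.mulLeft R (ιMulti R r υ)) ⊔ (C ⊔ Ideal.span {c}) • ⊤)
    {η : ExteriorAlgebra R M} (hη : η ∈ ⋀[R]^(r + q) M)
    (hw : ∀ j, ι R (υ j) * η ∈ C • (⊤ : Submodule R _)) :
    ∃ γ ∈ ⋀[R]^q M, η - ιMulti R r υ * γ ∈ C • (⊤ : Submodule R _) := by
  set Ω := ιMulti R r υ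
  obtain ⟨g, hg, hcg⟩ := exists_smul_sub_ιMulti_mul_mem υ hη hw hcΩ
  have hΩg : Ω * g ∈ (C ⊔ Ideal.span {c}) • (⊤ : Submodule R _) := by
    rw [Submodule.sup_smul, ← sub_sub_cancel (c • η) (Ω * g)]
    refine sub_mem (Submodule.mem_sup_right ?_) (Submodule.mem_sup_left hcg)
    exact Submodule.smul_mem_smul (Ideal.mem_span_singleton_self c) Submodule.mem_top
  obtain ⟨w, hw, v, hv, rfl⟩ := Submodule.mem_sup.mp (hA g hg hΩg)
  rw [Submodule.sup_smul] at hv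
  obtain ⟨v₀, hv₀, _, hv₁, rfl⟩ := Submodule.mem_sup.mp hv
  rw [Submodule.ideal_span_singleton_smul, Submodule.mem_smul_pointwise_iff_exists] at hv₁
  obtain ⟨γ, -, rfl⟩ := hv₁
  have hcancel : c • (η - Ω * γ) ∈ C • (⊤ : Submodule R _) := by
    have hΩw : Ω * w = 0 := hw
    have hΩv₀ : Ω * v₀ ∈ C • (⊤ : Submodule R _) :=
      Submodule.smul_top_le_comap_smul_top C (LinearMap.mulLeft R Ω) hv₀
    convert add_mem hcg hΩv₀ using 1
    rw [mul_add, mul_add, hΩw, mul_smul_comm]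
    module
  exact exists_mem_exteriorPower_sub_mul_mem (ιMulti_range R r ⟨υ, rfl⟩) hη
    (mem_of_isSMulRegular_quotient_of_smul_mem hc hcancel)

theorem mem_ker_sup_of_ιMulti_mul_mem {C J : Ideal R} {q : ℕ}
    (hB : ∀ {r : ℕ} (υ : Fin r → M), J ≤ coeffIdeal R (ιMulti R r υ) →
      ∀ η ∈ ⋀[R]^(r + q) M, (∀ j, ι R (υ j) * η ∈ C • (⊤ : Submodule R _)) →
        ∃ γ ∈ ⋀[R]^q M, η - ιMulti R r υ * γ ∈ C • (⊤ : Submodule R _))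
    {r : ℕ} (υ : Fin r → M) (hJ : J ≤ coeffIdeal R (ιMulti R r υ)) {ζ : ExteriorAlgebra R M}
    (hζ : ζ ∈ ⋀[R]^(q + 1) M) (h : ιMulti R r υ * ζ ∈ C • (⊤ : Submodule R _)) :
    ζ ∈ LinearMap.ker (LinearMap.mulLeft R (ιMulti R r υ)) ⊔ C • ⊤ := by
  induction r generalizing ζ with
  | zero => exact Submodule.mem_sup_right (by simpa using h)
  | succ r ih =>
    set u := υ 0
    set P := ιMulti R r (Fin.tail υ)
    have hΩ : ιMulti R (r + 1) υ = ι R u * P := ιMulti_succ_apply υ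
    have hP : P ∈ ⋀[R]^r M := ιMulti_range R r ⟨_, rfl⟩
    -- (B_q) applies to `P * ζ`; the resulting `γ` makes `P * (ζ - ± ι u * γ)` vanish mod `C`.
    have hPζ : P * ζ ∈ ⋀[R]^(r + 1 + q) M := by
      convert SetLike.mul_mem_graded hP hζ using 2; omega
    have hw : ∀ j, ι R (υ j) * (P * ζ) ∈ C • (⊤ : Submodule R _) := by
      refine Fin.cases (by rwa [← mul_assoc, ← hΩ]) fun j => ?_
      rw [← mul_assoc, show ι R (υ j.succ) * P = 0 from ι_mul_prod_list (Fin.tail υ) j,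
        zero_mul]
      exact zero_mem _
    obtain ⟨γ, hγ, hPζγ⟩ := hB υ hJ _ hPζ hw
    set ζ' := ζ - (-1 : R) ^ r • (ι R u * γ)
    have hζ' : ζ' ∈ ⋀[R]^(q + 1) M := by
      refine sub_mem hζ (Submodule.smul_mem _ _ ?_)
      convert SetLike.mul_mem_graded (ιMulti_range R 1 ⟨![u], by simp⟩ : ι R u ∈ ⋀[R]^1 M) hγ
        using 2
      omega
    have hPζ' : P * ζ' ∈ C • (⊤ : Submodule R _) := by
      convert hPζγ using 1
      rw [mul_sub, mul_smul_comm, ← mul_assoc, mul_ι_of_mem_exteriorPower hP, hΩ,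
        smul_mul_assoc, smul_smul, ← pow_add, ← two_mul, pow_mul, neg_one_sq, one_pow,
        one_smul, mul_assoc]
    have hker : LinearMap.ker (LinearMap.mulLeft R P) ≤
        LinearMap.ker (LinearMap.mulLeft R (ιMulti R (r + 1) υ)) := fun x hx => by
      rw [LinearMap.mem_ker, LinearMap.mulLeft_apply] at hx ⊢
      rw [hΩ, mul_assoc, hx, mul_zero]
    have hιγ : ι R u * γ ∈ LinearMap.ker (LinearMap.mulLeft R (ιMulti R (r + 1) υ)) := by
      rw [LinearMap.mem_ker, LinearMap.mulLeft_apply, ← mul_assoc, ιMulti_mul_ι_self υ 0,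
        zero_mul]
    rw [show ζ = ζ' + (-1 : R) ^ r • (ι R u * γ) from (sub_add_cancel _ _).symm]
    exact add_mem
      (sup_le_sup_right hker _ (ih _ (hJ.trans (hΩ ▸ coeffIdeal_mul_le _ _)) hζ' hPζ'))
      (Submodule.mem_sup_left (Submodule.smul_mem _ _ hιγ))

theorem exists_sub_ιMulti_mul_mem_ofList_take [Module.Free R M] {l : List R}
    (hl : IsWeaklyRegular (ExteriorAlgebra R M) l) {i : ℕ} (hi : i < l.length) {r q : ℕ}
    {υ : Fin r → M} (hυ : Ideal.ofList l ≤ coeffIdeal R (ιMulti R r υ))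
    (hA : ∀ ζ ∈ ⋀[R]^q M,
      ιMulti R r υ * ζ ∈ Ideal.ofList (l.take (i + 1)) • (⊤ : Submodule R _) →
        ζ ∈ LinearMap.ker (LinearMap.mulLeft R (ιMulti R r υ)) ⊔
          Ideal.ofList (l.take (i + 1)) • ⊤)
    {η : ExteriorAlgebra R M} (hη : η ∈ ⋀[R]^(r + q) M)
    (hw : ∀ j, ι R (υ j) * η ∈ Ideal.ofList (l.take i) • (⊤ : Submodule R _)) :
    ∃ γ ∈ ⋀[R]^q M, η - ιMulti R r υ * γ ∈ Ideal.ofList (l.take i) • (⊤ : Submodule R _) :=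
  exists_sub_ιMulti_mul_mem_of_isSMulRegular (hl.regular_mod_prev i hi)
    (hυ (Ideal.subset_span (List.getElem_mem hi))) (Ideal.ofList_take_succ l hi ▸ hA) hη hw

theorem mem_ker_sup_of_ιMulti_mul_mem_ofList_take [Module.Free R M] {l : List R}
    (hl : IsWeaklyRegular (ExteriorAlgebra R M) l) (q i : ℕ) (hi : i + q < l.length) {r : ℕ}
    (υ : Fin r → M) (hυ : Ideal.ofList l ≤ coeffIdeal R (ιMulti R r υ))
    {ζ : ExteriorAlgebra R M} (hζ : ζ ∈ ⋀[R]^q M)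
    (h : ιMulti R r υ * ζ ∈ Ideal.ofList (l.take i) • (⊤ : Submodule R _)) :
    ζ ∈ LinearMap.ker (LinearMap.mulLeft R (ιMulti R r υ)) ⊔ Ideal.ofList (l.take i) • ⊤ := by
  induction q generalizing i r ζ with
  | zero =>
    exact Submodule.mem_sup_right <| mem_smul_top_of_ιMulti_mul_mem (hl.regular_mod_prev i hi)
      (hυ (Ideal.subset_span (List.getElem_mem hi))) hζ h
  | succ q ih =>
    refine mem_ker_sup_of_ιMulti_mul_mem (fun υ hυ _ hη hw => ?_) υ hυ hζ h
    exact exists_sub_ιMulti_mul_mem_ofList_take hl (by omega) hυ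
      (fun _ hζ h => ih (i + 1) (by omega) υ hυ hζ h) hη hw

end ExteriorAlgebra

theorem wedgeProd_univ {R : Type*} [CommRing R] {M : Type*} [AddCommGroup M] [Module R M]
    {k : ℕ} (ω : Fin k → M) : wedgeProd R ω Finset.univ = ιMulti R k ω := by
  rw [wedgeProd, Fin.sort_univ, ιMulti_apply, List.ofFn_eq_map]

theorem stmt_6_general {R : Type*} [CommRing R] {M : Type*} [AddCommGroup M] [Module R M]
    {m k : ℕ} (b : Module.Basis (Fin m) R M)
    (ω : Fin k → M) (p : ℕ) (hkp : k ≤ p)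
    (hDC : ∃ l : List R, l.length = p - k + 2 ∧
      (∀ x ∈ l, x ∈ coeffIdeal R (wedgeProd R ω Finset.univ)) ∧ IsRegSeq R l)
    (η : ExteriorAlgebra R M) (hη : η ∈ ⋀[R]^p M) :
    (∃ γ : ExteriorAlgebra R M, γ ∈ ⋀[R]^(p - k) M ∧
        η = wedgeProd R ω Finset.univ * γ) ↔
      (∀ i : Fin k, η * ExteriorAlgebra.ι R (ω i) = 0) := by
  have := Module.Free.of_basis b
  obtain ⟨l, hlen, hlΩ, hl⟩ := hDC
  simp only [wedgeProd_univ, mul_ι_eq_zero_iff hη] at hlΩ ⊢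
  constructor
  · rintro ⟨γ, -, rfl⟩ i
    rw [← mul_assoc, ιMulti_apply, ι_mul_prod_list, zero_mul]
  · intro hw
    have hl' := hl.isWeaklyRegular.exteriorAlgebra (M := M)
    have hυ : Ideal.ofList l ≤ coeffIdeal R (ιMulti R k ω) := Ideal.span_le.mpr hlΩ
    obtain ⟨γ, hγ, hηγ⟩ := exists_sub_ιMulti_mul_mem_ofList_take hl' (i := 0) (by omega) hυ
      (fun _ hζ h => mem_ker_sup_of_ιMulti_mul_mem_ofList_take hl' (p - k) 1 (by omega) ω hυ hζ h)
      (η := η) (by rwa [Nat.add_sub_cancel' hkp]) (by simp [hw])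
    simp only [List.take_zero, Ideal.ofList_nil, Submodule.bot_smul, Submodule.mem_bot,
      sub_eq_zero] at hηγ
    exact ⟨γ, hγ, hηγ⟩

theorem stmt_6 {R : Type*} [CommRing R] {M : Type*} [AddCommGroup M] [Module R M]
    {m k : ℕ} (b : Module.Basis (Fin m) R M) (hk1 : 1 ≤ k) (hkm : k ≤ m)
    (ω : Fin k → M) (p : ℕ) (hkp : k ≤ p)
    (hDC : ∃ l : List R, l.length = p - k + 2 ∧
      (∀ x ∈ l, x ∈ coeffIdeal R (wedgeProd R ω Finset.univ)) ∧ IsRegSeq R l)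
    (η : ExteriorAlgebra R M) (hη : η ∈ ⋀[R]^p M) :
    (∃ γ : ExteriorAlgebra R M, γ ∈ ⋀[R]^(p - k) M ∧
        η = wedgeProd R ω Finset.univ * γ) ↔
      (∀ i : Fin k, η * ExteriorAlgebra.ι R (ω i) = 0) :=
  stmt_6_general b ω p hkp hDC η hη
end

section
/- Assume the elements ω₁,…,ω_k ∈ M can be completed to a basis of M. Then for any integers p ≥ r ≥ 1 and s with r + s = k + 1, every η ∈ Λ^p M satisfying ω_I ∧ η = 0 for all I ∈ 𝒥(s,k) can be represented as η = Σ_{J ∈ 𝒥(r,k)} ω_J ∧ γ_J with γ_J ∈ Λ^{p−r} M. -/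
/-!
Let `d₁, …, d_k` be the coordinate functionals of the completed basis dual to `ω₁, …, ω_k`, and
induct on a set `U` of indices, keeping `r + s = |U| + 1`. For `j ∈ U`, the contraction identity
`x = ω_j ∧ ⌊d_j⌋x + ⌊d_j⌋(ω_j ∧ x)` splits `x`. Since `⌊d_j⌋` is an antiderivation killing every
`ω_i` with `i ≠ j`, it commutes with `ω_I ∧ ·` up to sign for `j ∉ I`. Hence `⌊d_j⌋x` satisfies the
hypothesis on `U ∖ {j}` with the same `s` (so it lies in `Σ ω_J ∧ Λ` over `|J| = r - 1`, which
`ω_j ∧ ·` raises to `|J| = r`), and `⌊d_j⌋(ω_j ∧ x)` satisfies it with `s - 1` (so it lies in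
`Σ ω_J ∧ Λ` over `|J| = r` directly).
-/

open ExteriorAlgebra

open CliffordAlgebra Finset

namespace ExteriorAlgebra

variable {R : Type*} [CommRing R] {M : Type*} [AddCommGroup M] [Module R M]

theorem prod_map_ι_eq_or_eq_neg_of_perm {α : Type*} (f : α → M) {l₁ l₂ : List α}
    (h : l₁.Perm l₂) :
    (l₁.map fun a => ι R (f a)).prod = (l₂.map fun a => ι R (f a)).prod ∨
      (l₁.map fun a => ι R (f a)).prod = -(l₂.map fun a => ι R (f a)).prod := by
  induction h with
  | nil => exact Or.inl rfl
  | cons a _ ih =>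
    simp only [List.map_cons, List.prod_cons]
    rcases ih with h | h <;> simp [h]
  | swap a b l =>
    simp only [List.map_cons, List.prod_cons, ← mul_assoc]
    right
    rw [← neg_mul, eq_neg_of_add_eq_zero_left (ι_add_mul_swap (f b) (f a))]
  | trans _ _ ih₁ ih₂ =>
    rcases ih₁ with h₁ | h₁ <;> rcases ih₂ with h₂ | h₂ <;> simp [h₁, h₂]

theorem contractLeft_prod_map_ι_mul {α : Type*} (d : Module.Dual R M) (f : α → M) (l : List α)
    (hd : ∀ a ∈ l, d (f a) = 0) (x : ExteriorAlgebra R M) :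
    contractLeft d ((l.map fun a => ι R (f a)).prod * x) =
      (-1 : ℤˣ) ^ l.length • ((l.map fun a => ι R (f a)).prod * contractLeft d x) := by
  induction l with
  | nil => simp
  | cons a l ih =>
    simp only [List.map_cons, List.prod_cons, List.length_cons, mul_assoc]
    rw [contractLeft_ι_mul d (f a), hd a List.mem_cons_self, zero_smul, zero_sub,
      ih fun b hb => hd b (List.mem_cons_of_mem a hb), mul_smul_comm, pow_succ, mul_smul,
      Units.neg_smul, one_smul, smul_neg]

theorem ι_mul_mem_exteriorPower (v : M) {q : ℕ} {x : ExteriorAlgebra R M}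
    (hx : x ∈ ⋀[R]^q M) : ι R v * x ∈ ⋀[R]^(q + 1) M := by
  rw [exteriorPower, pow_succ']
  exact Submodule.mul_mem_mul ⟨v, rfl⟩ hx

theorem contractLeft_mem_exteriorPower (d : Module.Dual R M) :
    ∀ {q : ℕ} {x : ExteriorAlgebra R M}, x ∈ ⋀[R]^q M → contractLeft d x ∈ ⋀[R]^(q - 1) M
  | 0, x, hx => by
    obtain ⟨r, rfl⟩ := Submodule.mem_one.1 (by simpa [exteriorPower] using hx)
    rw [contractLeft_algebraMap]
    exact zero_mem _
  | 1, x, hx => by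
    obtain ⟨v, rfl⟩ := (by simpa [exteriorPower] using hx : x ∈ LinearMap.range (ι R))
    rw [contractLeft_ι]
    exact Submodule.mem_one.2 ⟨d v, rfl⟩
  | q + 2, x, hx => by
    rw [exteriorPower, pow_succ'] at hx
    refine Submodule.mul_induction_on hx ?_ fun u v hu hv => by rw [map_add]; exact add_mem hu hv
    rintro _ ⟨v, rfl⟩ y hy
    rw [contractLeft_ι_mul]
    exact sub_mem (Submodule.smul_mem _ _ hy)
      (ι_mul_mem_exteriorPower v (contractLeft_mem_exteriorPower d hy))

end ExteriorAlgebra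

section wedgeProd

variable {R : Type*} [CommRing R] {M : Type*} [AddCommGroup M] [Module R M] {k : ℕ}

@[simp]
theorem wedgeProd_empty (ω : Fin k → M) : wedgeProd R ω ∅ = 1 := by
  simp [wedgeProd]

theorem ι_mul_wedgeProd (ω : Fin k → M) {j : Fin k} {S : Finset (Fin k)} (hj : j ∉ S) :
    ι R (ω j) * wedgeProd R ω S = wedgeProd R ω (insert j S) ∨
      ι R (ω j) * wedgeProd R ω S = -wedgeProd R ω (insert j S) := by
  have hperm : (j :: S.sort (· ≤ ·)).Perm ((insert j S).sort (· ≤ ·)) :=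
    (List.perm_ext_iff_of_nodup (by simp [hj]) (sort_nodup _ _)).2 fun a => by simp
  simpa [wedgeProd] using prod_map_ι_eq_or_eq_neg_of_perm (R := R) ω hperm

theorem wedgeProd_mul_ι (ω : Fin k → M) {j : Fin k} {S : Finset (Fin k)} (hj : j ∉ S) :
    wedgeProd R ω S * ι R (ω j) = wedgeProd R ω (insert j S) ∨
      wedgeProd R ω S * ι R (ω j) = -wedgeProd R ω (insert j S) := by
  have hperm : (S.sort (· ≤ ·) ++ [j]).Perm ((insert j S).sort (· ≤ ·)) :=
    (List.perm_ext_iff_of_nodup (by simp [List.nodup_append, hj]) (sort_nodup _ _)).2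
      fun a => by simp [or_comm]
  simpa [wedgeProd] using prod_map_ι_eq_or_eq_neg_of_perm (R := R) ω hperm

theorem wedgeProd_mul_contractLeft_eq_zero (d : Module.Dual R M) (ω : Fin k → M)
    {I : Finset (Fin k)} (hd : ∀ i ∈ I, d (ω i) = 0) {x : ExteriorAlgebra R M}
    (hx : wedgeProd R ω I * x = 0) : wedgeProd R ω I * contractLeft d x = 0 := by
  have h : contractLeft d (wedgeProd R ω I * x) = _ • (wedgeProd R ω I * contractLeft d x) :=
    contractLeft_prod_map_ι_mul d ω (I.sort (· ≤ ·)) (by simpa using hd) x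
  rw [hx, map_zero] at h
  exact (smul_eq_zero_iff_eq _).1 h.symm

theorem wedgeProd_mul_ι_mul_eq_zero (ω : Fin k → M) {j : Fin k} {I : Finset (Fin k)}
    (hj : j ∉ I) {x : ExteriorAlgebra R M} (hx : wedgeProd R ω (insert j I) * x = 0) :
    wedgeProd R ω I * (ι R (ω j) * x) = 0 := by
  rw [← mul_assoc]
  rcases wedgeProd_mul_ι (R := R) ω hj with h | h <;> simp [h, hx]

end wedgeProd

section wedgeSpan

variable (R : Type*) [CommRing R] {M : Type*} [AddCommGroup M] [Module R M] {k : ℕ}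

noncomputable def wedgeSpan (ω : Fin k → M) (𝒥 : Finset (Finset (Fin k))) (q : ℕ) :
    Submodule R (ExteriorAlgebra R M) :=
  ⨆ J ∈ 𝒥, (⋀[R]^q M).map (LinearMap.mulLeft R (wedgeProd R ω J))

variable {R} {ω : Fin k → M} {𝒥 𝒥' : Finset (Finset (Fin k))} {q : ℕ}

theorem wedgeProd_mul_mem_wedgeSpan {J : Finset (Fin k)} (hJ : J ∈ 𝒥) {y : ExteriorAlgebra R M}
    (hy : y ∈ ⋀[R]^q M) : wedgeProd R ω J * y ∈ wedgeSpan R ω 𝒥 q :=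
  (le_biSup _ hJ : _ ≤ wedgeSpan R ω 𝒥 q) ⟨y, hy, rfl⟩

theorem mem_wedgeSpan_iff {x : ExteriorAlgebra R M} :
    x ∈ wedgeSpan R ω 𝒥 q ↔
      ∃ γ : Finset (Fin k) → ExteriorAlgebra R M,
        (∀ J, γ J ∈ ⋀[R]^q M) ∧ x = ∑ J ∈ 𝒥, wedgeProd R ω J * γ J := by
  constructor
  · intro hx
    obtain ⟨μ, rfl⟩ := (Submodule.mem_iSup_finset_iff_exists_sum _ x).1 hx
    choose γ hγ hμ using fun J => Submodule.mem_map.1 (μ J).2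
    exact ⟨γ, hγ, sum_congr rfl fun J _ => (hμ J).symm⟩
  · rintro ⟨γ, hγ, rfl⟩
    exact Submodule.sum_mem _ fun J hJ => wedgeProd_mul_mem_wedgeSpan hJ (hγ J)

theorem wedgeSpan_mono (h : 𝒥 ⊆ 𝒥') : wedgeSpan R ω 𝒥 q ≤ wedgeSpan R ω 𝒥' q :=
  biSup_mono fun _ hJ => h hJ

theorem ι_mul_mem_wedgeSpan_image_insert {j : Fin k} (hj : ∀ J ∈ 𝒥, j ∉ J)
    {x : ExteriorAlgebra R M} (hx : x ∈ wedgeSpan R ω 𝒥 q) :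
    ι R (ω j) * x ∈ wedgeSpan R ω (𝒥.image (insert j)) q := by
  suffices (wedgeSpan R ω 𝒥 q).map (LinearMap.mulLeft R (ι R (ω j))) ≤
      wedgeSpan R ω (𝒥.image (insert j)) q from this ⟨x, hx, rfl⟩
  rw [Submodule.map_le_iff_le_comap]
  refine iSup₂_le fun J hJ => ?_
  rintro _ ⟨y, hy, rfl⟩
  have hmem := wedgeProd_mul_mem_wedgeSpan (ω := ω) (mem_image_of_mem (insert j) hJ) hy
  rw [Submodule.mem_comap, LinearMap.mulLeft_apply, LinearMap.mulLeft_apply, ← mul_assoc]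
  rcases ι_mul_wedgeProd (R := R) ω (hj J hJ) with h | h <;> rw [h]
  · exact hmem
  · rw [neg_mul]; exact neg_mem hmem

end wedgeSpan

section Decomposition

variable {R : Type*} [CommRing R] {M : Type*} [AddCommGroup M] [Module R M] {k : ℕ}

theorem eq_ι_mul_contractLeft_add (d : Module.Dual R M) {v : M} (hv : d v = 1)
    (x : ExteriorAlgebra R M) : x = ι R v * contractLeft d x + contractLeft d (ι R v * x) := by
  rw [contractLeft_ι_mul d v, hv, one_smul, add_sub_cancel]

theorem image_insert_powersetCard_subset {α : Type*} [DecidableEq α] {j : α} {U : Finset α}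
    (hj : j ∉ U) (t : ℕ) :
    (U.powersetCard t).image (insert j) ⊆ (insert j U).powersetCard (t + 1) := by
  rw [powersetCard_succ_insert hj]
  exact subset_union_right

theorem mem_wedgeSpan_of_eq_zero_or_eq_zero {ω : Fin k → M} {U : Finset (Fin k)} {m t q : ℕ}
    (hmt : m = 0 ∨ t = 0) {x : ExteriorAlgebra R M} (hx : x ∈ ⋀[R]^q M)
    (hvan : ∀ I ∈ U.powersetCard t, wedgeProd R ω I * x = 0) :
    x ∈ wedgeSpan R ω (U.powersetCard m) (q - m) := by
  rcases hmt with rfl | rfl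
  · simpa using wedgeProd_mul_mem_wedgeSpan (ω := ω) (J := ∅) (by simp) hx
  · have hx0 : x = 0 := by simpa using hvan ∅ (by simp)
    exact hx0 ▸ zero_mem _

theorem mem_wedgeSpan_of_wedgeProd_mul_eq_zero {ω : Fin k → M} (d : Fin k → Module.Dual R M)
    (hd : ∀ i j, d i (ω j) = if i = j then 1 else 0) (U : Finset (Fin k)) {m t q : ℕ}
    (hmt : m + t = #U + 1) {x : ExteriorAlgebra R M} (hx : x ∈ ⋀[R]^q M)
    (hvan : ∀ I ∈ U.powersetCard t, wedgeProd R ω I * x = 0) :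
    x ∈ wedgeSpan R ω (U.powersetCard m) (q - m) := by
  induction U using Finset.induction_on generalizing m t q x with
  | empty => exact mem_wedgeSpan_of_eq_zero_or_eq_zero (by simp at hmt; omega) hx hvan
  | insert j U hj ih =>
    by_cases h0 : m = 0 ∨ t = 0
    · exact mem_wedgeSpan_of_eq_zero_or_eq_zero h0 hx hvan
    obtain ⟨m, rfl⟩ : ∃ m', m = m' + 1 := ⟨m - 1, by omega⟩
    obtain ⟨t, rfl⟩ : ∃ t', t = t' + 1 := ⟨t - 1, by omega⟩
    rw [card_insert_of_notMem hj] at hmt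
    have hdU : ∀ I ⊆ U, ∀ i ∈ I, d j (ω i) = 0 := fun I hI i hi => by
      rw [hd, if_neg (ne_of_mem_of_not_mem (hI hi) hj).symm]
    rw [eq_ι_mul_contractLeft_add (d j) (v := ω j) (by simp [hd]) x]
    refine add_mem ?_ ?_
    · have hD := ih (m := m) (t := t + 1) (by omega) (contractLeft_mem_exteriorPower (d j) hx)
        fun I hI => wedgeProd_mul_contractLeft_eq_zero _ _ (hdU I (mem_powersetCard.1 hI).1)
          (hvan I (powersetCard_mono (subset_insert j U) hI))
      rw [show q - 1 - m = q - (m + 1) by omega] at hD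
      exact wedgeSpan_mono (image_insert_powersetCard_subset hj m)
        (ι_mul_mem_wedgeSpan_image_insert (fun J hJ hjJ => hj ((mem_powersetCard.1 hJ).1 hjJ)) hD)
    · have hQ := ih (m := m + 1) (t := t) (by omega)
        (contractLeft_mem_exteriorPower (d j) (ι_mul_mem_exteriorPower (ω j) hx))
        fun I hI => wedgeProd_mul_contractLeft_eq_zero _ _ (hdU I (mem_powersetCard.1 hI).1)
          (wedgeProd_mul_ι_mul_eq_zero ω (fun hjI => hj ((mem_powersetCard.1 hI).1 hjI))
            (hvan _ (image_insert_powersetCard_subset hj t (mem_image_of_mem _ hI))))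
      exact wedgeSpan_mono (powersetCard_mono (subset_insert j U)) hQ

end Decomposition

theorem stmt_17_general {R : Type*} [CommRing R] {M : Type*} [AddCommGroup M] [Module R M]
    {k : ℕ} (ω : Fin k → M)
    (hbasis : ∃ (n : ℕ) (b : Module.Basis (Fin k ⊕ Fin n) R M), ∀ i, b (Sum.inl i) = ω i)
    (p r s : ℕ) (hrs : r + s = k + 1)
    (η : ExteriorAlgebra R M) (hη : η ∈ ⋀[R]^p M)
    (hB : ∀ I ∈ Finset.univ.powersetCard s, wedgeProd R ω I * η = 0) :
    ∃ γ : Finset (Fin k) → ExteriorAlgebra R M,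
      (∀ J, γ J ∈ ⋀[R]^(p - r) M) ∧
      η = ∑ J ∈ Finset.univ.powersetCard r, wedgeProd R ω J * γ J := by
  obtain ⟨n, b, hb⟩ := hbasis
  have hd : ∀ i j, b.coord (Sum.inl i) (ω j) = if i = j then 1 else 0 := fun i j => by
    simp [← hb, Finsupp.single_apply, eq_comm]
  exact mem_wedgeSpan_iff.1 <|
    mem_wedgeSpan_of_wedgeProd_mul_eq_zero _ hd univ (by simpa using hrs) hη hB

theorem stmt_17 {R : Type*} [CommRing R] {M : Type*} [AddCommGroup M] [Module R M]
    {k : ℕ} (hk1 : 1 ≤ k) (ω : Fin k → M)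
    (hbasis : ∃ (n : ℕ) (b : Module.Basis (Fin k ⊕ Fin n) R M), ∀ i, b (Sum.inl i) = ω i)
    (p r s : ℕ) (hr1 : 1 ≤ r) (hrp : r ≤ p) (hrs : r + s = k + 1)
    (η : ExteriorAlgebra R M) (hη : η ∈ ⋀[R]^p M)
    (hB : ∀ I ∈ Finset.univ.powersetCard s, wedgeProd R ω I * η = 0) :
    ∃ γ : Finset (Fin k) → ExteriorAlgebra R M,
      (∀ J, γ J ∈ ⋀[R]^(p - r) M) ∧
      η = ∑ J ∈ Finset.univ.powersetCard r, wedgeProd R ω J * γ J :=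
  stmt_17_general ω hbasis p r s hrs η hη hB
end
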